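/- In the plactic monoid P_n, for u ∈ P_n with content c(u) and X = f_1^{x_1}⋯f_n^{x_n} where x_{i+1} ≥ c_i(u) for all i < n, the product satisfies Xu = f_1^{x_1+c_1(u)} f_2^{x_2−c_1(u)+c_2(u)} ⋯ f_n^{x_n−c_{n−1}(u)+c_n(u)}. -/

import Mathlib

/-- The Knuth relations on words over the alphabet `Fin n`:
`xzy = zxy` for `x ≤ y < z` and `yxz = yzx` for `x < y ≤ z`. -/
def KnuthRel (n : ℕ) : FreeMonoid (Fin n) → FreeMonoid (Fin n) → Prop := fun a b =>
  (∃ x y z : Fin n, x ≤ y ∧ y < z ∧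
      a = FreeMonoid.of x * FreeMonoid.of z * FreeMonoid.of y ∧
      b = FreeMonoid.of z * FreeMonoid.of x * FreeMonoid.of y) ∨
  (∃ x y z : Fin n, x < y ∧ y ≤ z ∧
      a = FreeMonoid.of y * FreeMonoid.of x * FreeMonoid.of z ∧
      b = FreeMonoid.of y * FreeMonoid.of z * FreeMonoid.of x)

/-- The plactic monoid of rank `n`, presented by generators `Fin n` and the
Knuth relations. -/
def Plactic (n : ℕ) := (conGen (KnuthRel n)).Quotient

instance (n : ℕ) : Monoid (Plactic n) :=
  inferInstanceAs (Monoid (conGen (KnuthRel n)).Quotient)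

/-- The canonical projection from the free monoid to the plactic monoid. -/
def Plactic.mk (n : ℕ) : FreeMonoid (Fin n) →* Plactic n := Con.mk' _

/-- The column word `f_i = n (n-1) ⋯ i`: the strictly decreasing word of all
letters from `n` down to `i`. -/
def colWord (n : ℕ) (i : Fin n) : FreeMonoid (Fin n) :=
  FreeMonoid.ofList (((List.finRange n).filter (fun j => i ≤ j)).reverse)

/-- The column element `f_i` of the plactic monoid. -/
def colElt (n : ℕ) (i : Fin n) : Plactic n := Plactic.mk n (colWord n i)

/-- The ordered product `f_1^{x_1} f_2^{x_2} ⋯ f_n^{x_n}` of powers of the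
column elements. -/
def colProd (n : ℕ) (x : Fin n → ℕ) : Plactic n :=
  ((List.finRange n).map (fun j => colElt n j ^ x j)).prod

/-!
The columns `f_i` commute pairwise in `P_n`, and `f_i = f_{i+1} · i` where `f_{n+1} = 1`.
So multiplying a product of columns on the right by the letter `i` exchanges one factor
`f_{i+1}` for a factor `f_i`. The hypothesis lets us write `X = Y · ∏ f_{i+1}^{c_i(u)}`; feeding
in the letters of `u` one at a time turns this into `Y · ∏ f_i^{c_i(u)}`.

The commutation of columns reduces, by downward induction on the indices, to the single Knuth
move `(a+1) j a ≡ (a+1) a j` for `a < j`.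
-/

theorem List.prod_map_mul_of_commute {ι M : Type*} [Monoid M] (l : List ι) (f g : ι → M)
    (h : ∀ i j, Commute (g i) (f j)) :
    (l.map fun i => f i * g i).prod = (l.map f).prod * (l.map g).prod := by
  induction l with
  | nil => simp
  | cons a l ih =>
    have hcomm : Commute (g a) (l.map f).prod :=
      Commute.list_prod_right _ _ fun y hy => by
        obtain ⟨j, -, rfl⟩ := List.mem_map.1 hy
        exact h a j
    simp only [List.map_cons, List.prod_cons, ih, mul_assoc, hcomm.left_comm]

theorem List.filter_finRange_ge_eq_cons {n : ℕ} (i : Fin n) :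
    (List.finRange n).filter (fun j : Fin n => (i : ℕ) ≤ j) =
      i :: (List.finRange n).filter (fun j : Fin n => (i : ℕ) + 1 ≤ j) := by
  refine List.Pairwise.eq_of_mem_iff (r := fun a b : Fin n => a < b)
    ((List.sortedLT_finRange n).pairwise.filter _)
    (List.pairwise_cons.2 ⟨fun j hj => ?_, (List.sortedLT_finRange n).pairwise.filter _⟩) fun j => ?_
  · simp only [List.mem_filter, decide_eq_true_eq] at hj
    exact Fin.lt_def.2 hj.2
  · simp only [List.mem_filter, List.mem_finRange, true_and, decide_eq_true_eq, List.mem_cons,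
      Fin.ext_iff]
    omega

namespace Plactic

variable {n : ℕ}

def of (a : Fin n) : Plactic n := Plactic.mk n (FreeMonoid.of a)

theorem of_mul_of_mul_of_swap {x y z : Fin n} (hxy : x < y) (hyz : y ≤ z) :
    of y * of z * of x = of y * of x * of z := by
  have h : KnuthRel n (.of y * .of x * .of z) (.of y * .of z * .of x) :=
    Or.inr ⟨x, y, z, hxy, hyz, rfl, rfl⟩
  simp only [of, ← map_mul]
  exact ((Con.eq _).2 (ConGen.Rel.of _ _ h)).symm

/-- `column n i` is `f_{i+1}` in the 1-based notation of the statement. It is defined for every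
`i : ℕ`, with value `1` for `i ≥ n`, so that `f_i = f_{i+1} · i` holds for the top letter too. -/
def column (n i : ℕ) : Plactic n :=
  Plactic.mk n (FreeMonoid.ofList ((List.finRange n).filter (fun j : Fin n => i ≤ j)).reverse)

theorem colElt_eq_column (i : Fin n) : colElt n i = column n i := rfl

theorem column_of_le {i : ℕ} (h : n ≤ i) : column n i = 1 := by
  rw [column, List.filter_eq_nil_iff.2 (fun j _ => by simpa using j.isLt.trans_le h)]
  rfl

theorem column_eq_column_succ_mul_of {i : ℕ} (hi : i < n) :
    column n i = column n (i + 1) * of ⟨i, hi⟩ := by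
  rw [column, List.filter_finRange_ge_eq_cons ⟨i, hi⟩, List.reverse_cons,
    FreeMonoid.ofList_append, map_mul]
  rfl

theorem column_succ_mul_column_mul_of (a : Fin n) (j : ℕ) (haj : (a : ℕ) < j) :
    column n (a + 1) * column n j * of a = column n (a + 1) * of a * column n j := by
  by_cases hjn : n ≤ j
  · rw [column_of_le hjn, mul_one, mul_one]
  have ha' : (a : ℕ) + 1 < n := by omega
  have hj : j < n := by omega
  have ih_a := column_succ_mul_column_mul_of a (j + 1) (by omega)
  have ih_a' : column n (a + 1 + 1) * column n (j + 1) * of ⟨a + 1, ha'⟩ =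
      column n (a + 1 + 1) * of ⟨a + 1, ha'⟩ * column n (j + 1) :=
    column_succ_mul_column_mul_of ⟨a + 1, ha'⟩ (j + 1) (by simp; omega)
  have knuth : of ⟨a + 1, ha'⟩ * of ⟨j, hj⟩ * of a = of ⟨a + 1, ha'⟩ * of a * of ⟨j, hj⟩ :=
    of_mul_of_mul_of_swap (Fin.lt_def.2 (by simp)) (Fin.le_def.2 (by simp; omega))
  rw [column_eq_column_succ_mul_of hj, column_eq_column_succ_mul_of ha']
  calc column n (a + 1 + 1) * of ⟨a + 1, ha'⟩ * (column n (j + 1) * of ⟨j, hj⟩) * of a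
      = column n (a + 1 + 1) * column n (j + 1) * (of ⟨a + 1, ha'⟩ * of ⟨j, hj⟩ * of a) := by
        simp only [← mul_assoc]; rw [ih_a']
    _ = column n (a + 1 + 1) * of ⟨a + 1, ha'⟩ * column n (j + 1) * of a * of ⟨j, hj⟩ := by
        rw [knuth]; simp only [← mul_assoc]; rw [ih_a']
    _ = column n (a + 1 + 1) * of ⟨a + 1, ha'⟩ * of a * (column n (j + 1) * of ⟨j, hj⟩) := by
        simp only [← mul_assoc]; rw [← column_eq_column_succ_mul_of ha', ih_a]
termination_by n - j

theorem column_commute_of_le {i j : ℕ} (hij : i ≤ j) : Commute (column n i) (column n j) := by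
  rcases hij.eq_or_lt with rfl | hij
  · exact Commute.refl _
  by_cases hin : n ≤ i
  · rw [column_of_le hin]; exact Commute.one_left _
  have hi : i < n := by omega
  have ih := column_commute_of_le (Nat.succ_le_of_lt hij)
  rw [column_eq_column_succ_mul_of hi]
  calc column n (i + 1) * of ⟨i, hi⟩ * column n j
      = column n (i + 1) * column n j * of ⟨i, hi⟩ :=
        (column_succ_mul_column_mul_of ⟨i, hi⟩ j hij).symm
    _ = column n j * (column n (i + 1) * of ⟨i, hi⟩) := by rw [ih.eq, mul_assoc]
termination_by j - i

theorem column_commute (i j : ℕ) : Commute (column n i) (column n j) :=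
  (le_total i j).elim column_commute_of_le fun h => (column_commute_of_le h).symm

theorem colProd_add (x y : Fin n → ℕ) : colProd n (x + y) = colProd n x * colProd n y := by
  simp only [colProd, Pi.add_apply, pow_add]
  exact List.prod_map_mul_of_commute _ _ _ fun i j => (column_commute i j).pow_pow _ _

theorem colProd_commute (x y : Fin n → ℕ) : Commute (colProd n x) (colProd n y) := by
  rw [Commute, SemiconjBy, ← colProd_add, ← colProd_add, add_comm]

def unitExp (n k : ℕ) : Fin n → ℕ := fun j => if (j : ℕ) = k then 1 else 0

theorem colProd_unitExp (k : ℕ) : colProd n (unitExp n k) = column n k := by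
  by_cases hk : k < n
  · rw [colProd, List.prod_map_eq_pow_single ⟨k, hk⟩ _ fun j hj _ => ?_]
    · simp [unitExp, List.count_finRange, colElt_eq_column]
    · simp [unitExp, Fin.ext_iff.not.1 hj]
  · rw [column_of_le (not_lt.1 hk), colProd, List.prod_eq_one]
    simp only [List.mem_map, forall_exists_index, and_imp, forall_apply_eq_imp_iff₂]
    intro j _
    simp [unitExp, show (j : ℕ) ≠ k by omega]

theorem column_commute_colProd (k : ℕ) (x : Fin n → ℕ) : Commute (column n k) (colProd n x) := by
  rw [← colProd_unitExp]
  exact colProd_commute _ _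

def shiftUp (c : Fin n → ℕ) (j : Fin n) : ℕ := if (j : ℕ) = 0 then 0 else c ⟨j - 1, by omega⟩

theorem shiftUp_add (c d : Fin n → ℕ) : shiftUp (c + d) = shiftUp c + shiftUp d := by
  funext j
  simp only [shiftUp, Pi.add_apply]
  split_ifs <;> rfl

theorem shiftUp_unitExp (k : ℕ) : shiftUp (unitExp n k) = unitExp n (k + 1) := by
  funext j
  simp only [shiftUp, unitExp]
  split_ifs <;> omega

theorem shiftUp_le {c x : Fin n → ℕ}
    (h : ∀ (i : Fin n) (hi : (i : ℕ) + 1 < n), c i ≤ x ⟨i + 1, hi⟩) : shiftUp c ≤ x := by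
  intro j
  unfold shiftUp
  split_ifs with hj
  · exact Nat.zero_le _
  · convert h ⟨j - 1, by omega⟩ (by simp; omega) using 2
    exact Fin.ext (by simp; omega)

def content (u : FreeMonoid (Fin n)) : Fin n → ℕ := fun j => u.toList.count j

theorem content_of_mul (i : Fin n) (u : FreeMonoid (Fin n)) :
    content (.of i * u) = unitExp n i + content u := by
  funext j
  simp only [content, unitExp, FreeMonoid.toList_of_mul, List.count_cons, beq_iff_eq, Fin.ext_iff,
    Pi.add_apply]
  split_ifs <;> omega

theorem colProd_shiftUp_content_mul (u : FreeMonoid (Fin n)) :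
    colProd n (shiftUp (content u)) * Plactic.mk n u = colProd n (content u) := by
  induction u using FreeMonoid.inductionOn' with
  | one => simp [content, shiftUp, colProd]
  | of_mul i u ih =>
    rw [content_of_mul, shiftUp_add, shiftUp_unitExp, colProd_add, colProd_add, colProd_unitExp,
      colProd_unitExp, map_mul]
    calc column n (i + 1) * colProd n (shiftUp (content u)) * (mk n (.of i) * mk n u)
        = colProd n (shiftUp (content u)) * (column n (i + 1) * of i) * mk n u := by
          rw [(column_commute_colProd _ _).eq]; simp only [of, mul_assoc]
      _ = column n i * colProd n (content u) := by
          rw [← column_eq_column_succ_mul_of i.isLt, ← (column_commute_colProd _ _).eq, mul_assoc,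
            ih]

end Plactic

open Plactic in
/-- For `u ∈ P_n` and `X = f_1^{x_1} ⋯ f_n^{x_n}` with `x_{i+1} ≥ c_i(u)` for
all `i < n`, we have
`Xu = f_1^{x_1+c_1(u)} f_2^{x_2−c_1(u)+c_2(u)} ⋯ f_n^{x_n−c_{n−1}(u)+c_n(u)}`. -/
theorem plactic_colProd_mul_formula (n : ℕ) (u : FreeMonoid (Fin n)) (x : Fin n → ℕ)
    (hx : ∀ (i : Fin n) (h : (i : ℕ) + 1 < n),
      (FreeMonoid.toList u).count i ≤ x ⟨(i : ℕ) + 1, h⟩) :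
    colProd n x * Plactic.mk n u =
      colProd n (fun j =>
        if (j : ℕ) = 0 then x j + (FreeMonoid.toList u).count j
        else x j + (FreeMonoid.toList u).count j -
          (FreeMonoid.toList u).count
            ⟨(j : ℕ) - 1, Nat.lt_of_le_of_lt (Nat.sub_le _ _) j.isLt⟩) := by
  have hle : shiftUp (content u) ≤ x := shiftUp_le hx
  calc colProd n x * Plactic.mk n u
      = colProd n (x - shiftUp (content u)) * (colProd n (shiftUp (content u)) * mk n u) := by
        rw [← mul_assoc, ← colProd_add, tsub_add_cancel_of_le hle]
    _ = colProd n (x - shiftUp (content u) + content u) := by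
        rw [colProd_shiftUp_content_mul, colProd_add]
    _ = _ := by
        congr 1
        funext j
        have hj := hle j
        simp only [shiftUp, content, Pi.add_apply, Pi.sub_apply] at hj ⊢
        split_ifs at hj ⊢ <;> omega
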